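/- arXiv:2408.10242 — 6 statements merged into one kernel-verified Lean document; each statement's English description precedes it below -/
import Mathlib

section
/- Let H be a subgroup of a semigroup S whose identity 1_H is a left identity of S, and let A ⊆ S. Then the product HA is direct (every element of HA has a unique representation ha with h ∈ H, a ∈ A) if and only if A ∩ (H*)A = ∅, where H* = H \ {1_H}. -/
open Pointwise

/-- For a subgroup `H` of a semigroup `S` whose identity `e` is a left identity
of `S`, the product `H * A` is direct iff `A ∩ (H \ {e}) * A = ∅`. -/
theorem stmt3 {S : Type*} [Semigroup S] (H : Set S) (e : S) (A : Set S)
    (heH : e ∈ H) (hleft : ∀ s : S, e * s = s)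
    (hmul : ∀ a ∈ H, ∀ b ∈ H, a * b ∈ H)
    (hre : ∀ h ∈ H, h * e = h)
    (hinv : ∀ h ∈ H, ∃ h' ∈ H, h' * h = e ∧ h * h' = e) :
    (∀ h₁ ∈ H, ∀ h₂ ∈ H, ∀ a₁ ∈ A, ∀ a₂ ∈ A,
        h₁ * a₁ = h₂ * a₂ → h₁ = h₂ ∧ a₁ = a₂) ↔
      A ∩ ((H \ {e}) * A) = ∅ := by
  constructor
  · intro hdir
    ext x
    simp only [Set.mem_inter_iff, Set.mem_empty_iff_false, iff_false]
    rintro ⟨hxA, h, ⟨hH, hne⟩, a, haA, rfl⟩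
    have := hdir e heH h hH (h * a) hxA a haA (hleft _)
    exact hne (this.1.symm ▸ Set.mem_singleton e)
  · intro hempty h₁ h₁H h₂ h₂H a₁ ha₁ a₂ ha₂ heq
    obtain ⟨h₁', h₁'H, hinv1, hinv2⟩ := hinv h₁ h₁H
    have ha : a₁ = (h₁' * h₂) * a₂ := by
      calc a₁ = e * a₁ := (hleft _).symm
        _ = (h₁' * h₁) * a₁ := by rw [hinv1]
        _ = h₁' * (h₁ * a₁) := mul_assoc _ _ _
        _ = h₁' * (h₂ * a₂) := by rw [heq]
        _ = (h₁' * h₂) * a₂ := (mul_assoc _ _ _).symm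
    have hkey : h₁' * h₂ = e := by
      by_contra hne
      have : a₁ ∈ A ∩ ((H \ {e}) * A) :=
        ⟨ha₁, ⟨h₁' * h₂, ⟨hmul _ h₁'H _ h₂H, hne⟩, a₂, ha₂, ha.symm⟩⟩
      rw [hempty] at this
      exact this
    have h12 : h₁ = h₂ := by
      calc h₁ = h₁ * e := (hre _ h₁H).symm
        _ = h₁ * (h₁' * h₂) := by rw [hkey]
        _ = (h₁ * h₁') * h₂ := (mul_assoc _ _ _).symm
        _ = e * h₂ := by rw [hinv2]
        _ = h₂ := hleft _
    exact ⟨h12, by rw [ha, hkey, hleft]⟩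
end

section
/- If G is a subgroup of (ℚ, +) and P ⊆ G is a subsemigroup such that G is the disjoint union of P, −P, and {0}, then P = G ∩ (0, ∞) or P = G ∩ (−∞, 0). -/
/-- If `G ≤ (ℚ, +)` and `P ⊆ G` is a subsemigroup such that `G` is the disjoint
union of `P`, `-P` and `{0}`, then `P = G ∩ (0, ∞)` or `P = G ∩ (-∞, 0)`. -/
theorem stmt7 (G : AddSubgroup ℚ) (P : Set ℚ)
    (hadd : ∀ a ∈ P, ∀ b ∈ P, a + b ∈ P)
    (hunion : P ∪ (-P) ∪ {(0 : ℚ)} = (G : Set ℚ))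
    (h1 : P ∩ (-P) = ∅) (h2 : P ∩ {(0 : ℚ)} = ∅) (h3 : (-P) ∩ {(0 : ℚ)} = ∅) :
    P = (G : Set ℚ) ∩ Set.Ioi 0 ∨ P = (G : Set ℚ) ∩ Set.Iio 0 := by
  have hPG : P ⊆ (G : Set ℚ) := by
    rw [← hunion]; intro x hx; exact Or.inl (Or.inl hx)
  have hne0 : ∀ a ∈ P, a ≠ 0 := by
    intro a ha h0
    have : a ∈ P ∩ {(0 : ℚ)} := ⟨ha, by simp [h0]⟩
    rw [h2] at this; exact this
  have hsmul : ∀ n : ℕ, 0 < n → ∀ a ∈ P, (n : ℚ) * a ∈ P := by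
    intro n hn
    induction n with
    | zero => omega
    | succ k ih =>
      intro a ha
      rcases Nat.eq_zero_or_pos k with hk | hk
      · subst hk; simpa using ha
      · have := hadd _ (ih hk a ha) _ ha
        have h : ((k + 1 : ℕ) : ℚ) * a = (k : ℚ) * a + a := by push_cast; ring
        rw [h]; exact this
  have hsign : ∀ a ∈ P, ∀ b ∈ P, 0 < a → b < 0 → False := by
    intro a ha b hb hpa hnb
    have hm : 0 < a.den * b.num.natAbs :=
      Nat.mul_pos a.pos (Int.natAbs_pos.mpr (Rat.num_ne_zero.mpr (ne_of_lt hnb)))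
    have hn : 0 < b.den * a.num.natAbs :=
      Nat.mul_pos b.pos (Int.natAbs_pos.mpr (Rat.num_ne_zero.mpr (ne_of_gt hpa)))
    have hma := hsmul _ hm a ha
    have hnb' := hsmul _ hn b hb
    have hsum := hadd _ hma _ hnb'
    have heq : ((a.den * b.num.natAbs : ℕ) : ℚ) * a + ((b.den * a.num.natAbs : ℕ) : ℚ) * b = 0 := by
      have ha' : (a.den : ℚ) * a = a.num := by
        rw [mul_comm]; exact_mod_cast Rat.mul_den_eq_num a
      have hb' : (b.den : ℚ) * b = b.num := by
        rw [mul_comm]; exact_mod_cast Rat.mul_den_eq_num b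
      have hna : (a.num.natAbs : ℚ) = (a.num : ℚ) := by
        rw [Nat.cast_natAbs, abs_of_pos]; exact_mod_cast Rat.num_pos.mpr hpa
      have hnb2 : (b.num.natAbs : ℚ) = -(b.num : ℚ) := by
        have h0 : b.num < 0 := by rw [← not_le, Rat.num_nonneg, not_le]; exact hnb
        rw [Nat.cast_natAbs, abs_of_neg h0]; push_cast; ring
      push_cast [hna, hnb2]
      calc (a.den : ℚ) * -(b.num : ℚ) * a + (b.den : ℚ) * (a.num : ℚ) * b
          = -(b.num : ℚ) * ((a.den : ℚ) * a) + (a.num : ℚ) * ((b.den : ℚ) * b) := by ring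
        _ = 0 := by rw [ha', hb']; ring
    rw [heq] at hsum
    exact hne0 _ hsum rfl
  have hmem : ∀ x ∈ (G : Set ℚ), x ∈ P ∨ (-x) ∈ P ∨ x = 0 := by
    intro x hx
    rw [← hunion] at hx
    rcases hx with (h | h) | h
    · exact Or.inl h
    · exact Or.inr (Or.inl h)
    · exact Or.inr (Or.inr h)
  by_cases hex : ∃ a ∈ P, 0 < a
  · obtain ⟨a, ha, hpa⟩ := hex
    left
    ext x
    constructor
    · intro hx
      refine ⟨hPG hx, ?_⟩
      rcases lt_trichotomy x 0 with h | h | h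
      · exact absurd (hsign a ha x hx hpa h) (fun t => t)
      · exact absurd h (hne0 x hx)
      · exact h
    · rintro ⟨hxG, hx⟩
      rcases hmem x hxG with h | h | h
      · exact h
      · exact absurd (hsign a ha (-x) h hpa (by simpa using Set.mem_Ioi.mp hx)) (fun t => t)
      · exact absurd h (ne_of_gt (Set.mem_Ioi.mp hx))
  · right
    push_neg at hex
    ext x
    constructor
    · intro hx
      refine ⟨hPG hx, ?_⟩
      rcases lt_trichotomy x 0 with h | h | h
      · exact h
      · exact absurd h (hne0 x hx)
      · exact absurd h (not_lt.mpr (hex x hx))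
    · rintro ⟨hxG, hx⟩
      rcases hmem x hxG with h | h | h
      · exact h
      · exact absurd (hex _ h) (not_le.mpr (by simpa using neg_pos.mpr (Set.mem_Iio.mp hx)))
      · exact absurd h (ne_of_lt (Set.mem_Iio.mp hx))
end

section
/- Let A ⊆ ℝ satisfy 1 + A ⊆ A. Then A has the unique direct representation A = (ℤ + D) ∪ (ℤ≥0 + E), a disjoint union with both sums direct, where D ⊆ [0,1), E = A \ (1 + A), ℤ + D = Pk(A) := {x : x + ℤ ⊆ A}, and E satisfies E ∩ (E + ℤ*) = ∅ (E is anti integer-transference). -/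
/-- Every `A ⊆ ℝ` with `1 + A ⊆ A` has the unique direct representation
`A = (ℤ + D) ∪ (ℤ≥0 + E)`, a disjoint union with both sums direct, where
`D ⊆ [0,1)`, `E = A \ (1 + A)`, `ℤ + D = Pk(A) = {x : x + ℤ ⊆ A}`, and
`E ∩ (E + ℤ*) = ∅`. -/
theorem stmt15 (A : Set ℝ) (h : ∀ a ∈ A, a + 1 ∈ A) :
    ∃ D E : Set ℝ,
      D ⊆ Set.Ico (0 : ℝ) 1 ∧
      E = {a ∈ A | a - 1 ∉ A} ∧
      A = {x : ℝ | ∃ n : ℤ, ∃ d ∈ D, x = n + d} ∪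
          {x : ℝ | ∃ n : ℕ, ∃ e ∈ E, x = n + e} ∧
      {x : ℝ | ∃ n : ℤ, ∃ d ∈ D, x = n + d} ∩
          {x : ℝ | ∃ n : ℕ, ∃ e ∈ E, x = n + e} = ∅ ∧
      {x : ℝ | ∃ n : ℤ, ∃ d ∈ D, x = n + d} = {x : ℝ | ∀ k : ℤ, x + k ∈ A} ∧
      (∀ n m : ℤ, ∀ d ∈ D, ∀ d' ∈ D, (n : ℝ) + d = (m : ℝ) + d' → n = m ∧ d = d') ∧
      (∀ n m : ℕ, ∀ e ∈ E, ∀ e' ∈ E, (n : ℝ) + e = (m : ℝ) + e' → n = m ∧ e = e') ∧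
      (∀ e ∈ E, ∀ e' ∈ E, ∀ k : ℤ, k ≠ 0 → e ≠ e' + k) ∧
      (∀ D' ⊆ Set.Ico (0 : ℝ) 1, ∀ E' : Set ℝ,
        A = {x : ℝ | ∃ n : ℤ, ∃ d ∈ D', x = n + d} ∪
            {x : ℝ | ∃ n : ℕ, ∃ e ∈ E', x = n + e} →
        {x : ℝ | ∃ n : ℤ, ∃ d ∈ D', x = n + d} ∩
            {x : ℝ | ∃ n : ℕ, ∃ e ∈ E', x = n + e} = ∅ →
        (∀ e ∈ E', ∀ e' ∈ E', ∀ k : ℤ, k ≠ 0 → e ≠ e' + k) →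
        D' = D ∧ E' = E) := by
  classical
  -- closure under nonnegative shifts
  have hAnat : ∀ a ∈ A, ∀ n : ℕ, a + n ∈ A := by
    intro a ha n
    induction n with
    | zero => simpa using ha
    | succ n ih =>
      have h1 := h _ ih
      have heq : a + ((n : ℕ) + 1 : ℝ) = a + n + 1 := by ring
      push_cast
      rw [heq]; exact h1
  have hAint : ∀ a ∈ A, ∀ k : ℤ, 0 ≤ k → a + k ∈ A := by
    intro a ha k hk
    have h1 := hAnat a ha k.toNat
    have h2 : ((k.toNat : ℕ) : ℝ) = (k : ℝ) := by exact_mod_cast Int.toNat_of_nonneg hk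
    rwa [h2] at h1
  -- the periodic part
  set P : Set ℝ := {x : ℝ | ∀ k : ℤ, x + k ∈ A} with hPdef
  have hPA : P ⊆ A := by
    intro x hx; simpa using hx 0
  have hPZ : ∀ x ∈ P, ∀ k : ℤ, x + (k : ℝ) ∈ P := by
    intro x hx k j
    have h1 := hx (k + j)
    push_cast at h1
    rwa [← add_assoc] at h1
  set D : Set ℝ := P ∩ Set.Ico 0 1 with hDdef
  set E : Set ℝ := {a ∈ A | a - 1 ∉ A} with hEdef
  -- integer between 0 and 1 gap lemma
  have hgap : ∀ (k : ℤ) (d d' : ℝ), d ∈ Set.Ico (0:ℝ) 1 → d' ∈ Set.Ico (0:ℝ) 1 →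
      (k : ℝ) + d = d' → k = 0 := by
    intro k d d' hd hd' hk
    have h1 : |(k : ℝ)| < 1 := by
      rw [abs_lt]
      constructor
      · linarith [hd.1, hd.2, hd'.1, hd'.2]
      · linarith [hd.1, hd.2, hd'.1, hd'.2]
    have h2 : ((|k| : ℤ) : ℝ) < 1 := by rwa [Int.cast_abs]
    have h3 : |k| < 1 := by exact_mod_cast h2
    exact Int.abs_lt_one_iff.mp h3
  -- ℤ + D = P
  have hZD : {x : ℝ | ∃ n : ℤ, ∃ d ∈ D, x = n + d} = P := by
    ext x
    constructor
    · rintro ⟨n, d, ⟨hdP, _⟩, rfl⟩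
      have := hPZ d hdP n
      rwa [add_comm] at this
    · intro hx
      refine ⟨⌊x⌋, Int.fract x, ⟨?_, Int.fract_nonneg x, Int.fract_lt_one x⟩, ?_⟩
      · have := hPZ x hx (-⌊x⌋)
        have heq : x + ((-⌊x⌋ : ℤ) : ℝ) = Int.fract x := by
          rw [Int.fract]; push_cast; ring
        rwa [heq] at this
      · rw [Int.fract]; ring
  -- anti integer-transference of E
  have hanti : ∀ e ∈ E, ∀ e' ∈ E, ∀ k : ℤ, k ≠ 0 → e ≠ e' + (k : ℝ) := by
    intro e he e' he' k hk heq
    rcases lt_or_gt_of_ne hk with hneg | hpos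
    · -- k < 0 : e' = e + (-k), e' - 1 = e + (-k-1) ∈ A
      apply he'.2
      have h1 := hAint e he.1 (-k - 1) (by omega)
      have h2 : e + ((-k - 1 : ℤ) : ℝ) = e' - 1 := by rw [heq]; push_cast; ring
      rwa [h2] at h1
    · apply he.2
      have h1 := hAint e' he'.1 (k - 1) (by omega)
      have h2 : e' + ((k - 1 : ℤ) : ℝ) = e - 1 := by rw [heq]; push_cast; ring
      rwa [h2] at h1
  -- decomposition of A
  have hdecomp : A = {x : ℝ | ∃ n : ℤ, ∃ d ∈ D, x = n + d} ∪
      {x : ℝ | ∃ n : ℕ, ∃ e ∈ E, x = n + e} := by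
    ext a
    constructor
    · intro ha
      by_cases haP : a ∈ P
      · left; rw [hZD]; exact haP
      · right
        have hS : ∃ m : ℕ, a - (m : ℝ) ∉ A := by
          simp only [hPdef, Set.mem_setOf_eq, not_forall] at haP
          obtain ⟨k, hk⟩ := haP
          have hkneg : k < 0 := by
            by_contra hcon
            exact hk (hAint a ha k (by omega))
          refine ⟨(-k).toNat, ?_⟩
          have h2 : (((-k).toNat : ℕ) : ℝ) = ((-k : ℤ) : ℝ) := by
            exact_mod_cast Int.toNat_of_nonneg (by omega)
          rw [h2]
          push_cast
          convert hk using 2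
          ring
        set m0 := Nat.find hS with hm0
        have hm0mem : a - (m0 : ℝ) ∉ A := Nat.find_spec hS
        have hm0pos : 0 < m0 := by
          rcases Nat.eq_zero_or_pos m0 with h1 | h1
          · exfalso; apply hm0mem; rw [h1]; simpa using ha
          · exact h1
        have hmin : a - ((m0 - 1 : ℕ) : ℝ) ∈ A := by
          by_contra hcon
          exact absurd (Nat.find_min hS (show m0 - 1 < m0 by omega)) (by simpa using hcon)
        refine ⟨m0 - 1, a - ((m0 - 1 : ℕ) : ℝ), ⟨hmin, ?_⟩, by ring⟩
        have hcast : ((m0 - 1 : ℕ) : ℝ) = (m0 : ℝ) - 1 := by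
          have : (1 : ℕ) ≤ m0 := hm0pos
          push_cast [Nat.cast_sub this]
          ring
        rw [hcast]
        have : a - ((m0 : ℝ) - 1) - 1 = a - m0 := by ring
        rw [this]
        exact hm0mem
    · rintro (hx | hx)
      · rw [hZD] at hx; exact hPA hx
      · obtain ⟨n, e, he, rfl⟩ := hx
        have := hAnat e he.1 n
        rwa [add_comm] at this
  -- disjointness
  have hdisj : {x : ℝ | ∃ n : ℤ, ∃ d ∈ D, x = n + d} ∩
      {x : ℝ | ∃ n : ℕ, ∃ e ∈ E, x = n + e} = ∅ := by
    rw [Set.eq_empty_iff_forall_notMem]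
    rintro x ⟨hx1, n, e, he, rfl⟩
    rw [hZD] at hx1
    have heP : e ∈ P := by
      have := hPZ _ hx1 (-(n : ℤ))
      have heq : (n : ℝ) + e + ((-(n : ℤ) : ℤ) : ℝ) = e := by push_cast; ring
      rwa [heq] at this
    apply he.2
    have := heP (-1)
    have heq : e + ((-1 : ℤ) : ℝ) = e - 1 := by push_cast; ring
    rwa [heq] at this
  refine ⟨D, E, fun d hd => hd.2, rfl, hdecomp, hdisj, hZD, ?_, ?_, hanti, ?_⟩
  · -- ℤ + D direct
    intro n m d hd d' hd' heq
    have hnm : n - m = 0 := hgap (n - m) d d' hd.2 hd'.2 (by push_cast; linarith)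
    have hn : n = m := by omega
    refine ⟨hn, ?_⟩
    subst hn
    linarith
  · -- ℕ + E direct
    intro n m e he e' he' heq
    have hnm : (m : ℤ) = (n : ℤ) := by
      by_contra hcon
      exact hanti e he e' he' ((m : ℤ) - n) (by omega) (by push_cast; linarith)
    have hn : n = m := by omega
    exact ⟨hn, by subst hn; linarith⟩
  · -- uniqueness
    intro D' hD' E' hA' hdisj' hanti'
    have hZD' : {x : ℝ | ∃ n : ℤ, ∃ d ∈ D', x = n + d} = P := by
      ext x
      constructor
      · rintro ⟨n, d, hd, rfl⟩ k
        have hmem : (n : ℝ) + d + (k : ℝ) ∈ {x : ℝ | ∃ n : ℤ, ∃ d ∈ D', x = n + d} := by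
          exact ⟨n + k, d, hd, by push_cast; ring⟩
        rw [hA']; exact Or.inl hmem
      · intro hx
        have hxA : x ∈ A := hPA hx
        rw [hA'] at hxA
        rcases hxA with hx1 | hx1
        · exact hx1
        · exfalso
          obtain ⟨n, e, he, rfl⟩ := hx1
          -- consider x - (n+1) ∈ A
          have hy : (n : ℝ) + e + ((-(n : ℤ) - 1 : ℤ) : ℝ) ∈ A := hx (-(n : ℤ) - 1)
          have hyeq : (n : ℝ) + e + ((-(n : ℤ) - 1 : ℤ) : ℝ) = e - 1 := by push_cast; ring
          rw [hyeq] at hy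
          rw [hA'] at hy
          rcases hy with hy | hy
          · -- then n + e ∈ ZD', contradicting disjointness
            obtain ⟨j, d, hd, hjd⟩ := hy
            have hmem : (n : ℝ) + e ∈ {x : ℝ | ∃ n : ℤ, ∃ d ∈ D', x = n + d} ∩
                {x : ℝ | ∃ n : ℕ, ∃ e ∈ E', x = n + e} := by
              refine ⟨⟨j + n + 1, d, hd, ?_⟩, ⟨n, e, he, rfl⟩⟩
              push_cast
              linarith
            rw [hdisj'] at hmem
            exact hmem
          · obtain ⟨m, f, hf, hmf⟩ := hy
            exact hanti' f hf e he (-(m : ℤ) - 1) (by omega)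
              (by push_cast; linarith)
    have hDD : D' = D := by
      ext d
      constructor
      · intro hd
        have hdP : d ∈ P := by
          rw [← hZD']
          exact ⟨0, d, hd, by simp⟩
        exact ⟨hdP, hD' hd⟩
      · intro hd
        have : d ∈ {x : ℝ | ∃ n : ℤ, ∃ d ∈ D', x = n + d} := by rw [hZD']; exact hd.1
        obtain ⟨n, d', hd', hdd⟩ := this
        have hn : n = 0 := hgap n d' d (hD' hd') hd.2 (by linarith)
        subst hn
        have : d = d' := by push_cast at hdd; linarith
        rwa [this]
    refine ⟨hDD, ?_⟩
    ext e
    constructor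
    · intro he
      have heA : e ∈ A := by
        rw [hA']; exact Or.inr ⟨0, e, he, by simp⟩
      refine ⟨heA, ?_⟩
      intro hcon
      rw [hA'] at hcon
      rcases hcon with hc | hc
      · -- e - 1 ∈ P so e ∈ ZD', contradicting disjointness
        rw [hZD'] at hc
        have heP : e ∈ P := by
          have := hPZ _ hc 1
          have heq : e - 1 + ((1 : ℤ) : ℝ) = e := by push_cast; ring
          rwa [heq] at this
        have hmem : e ∈ {x : ℝ | ∃ n : ℤ, ∃ d ∈ D', x = n + d} ∩
            {x : ℝ | ∃ n : ℕ, ∃ e ∈ E', x = n + e} := by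
          constructor
          · rw [hZD']; exact heP
          · exact ⟨0, e, he, by simp⟩
        rw [hdisj'] at hmem
        exact hmem
      · obtain ⟨m, f, hf, hmf⟩ := hc
        exact hanti' e he f hf ((m : ℤ) + 1) (by omega) (by push_cast; linarith)
    · intro he
      have heA : e ∈ A := he.1
      have henP : e ∉ P := by
        intro hcon
        apply he.2
        have := hcon (-1)
        have heq : e + ((-1 : ℤ) : ℝ) = e - 1 := by push_cast; ring
        rwa [heq] at this
      rw [hA'] at heA
      rcases heA with hc | hc
      · rw [hZD'] at hc; exact absurd hc henP
      · obtain ⟨m, f, hf, hmf⟩ := hc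
        rcases Nat.eq_zero_or_pos m with hm | hm
        · subst hm
          have : e = f := by push_cast at hmf; linarith
          rwa [this]
        · exfalso
          apply he.2
          have hmemA : ((m - 1 : ℕ) : ℝ) + f ∈ A := by
            rw [hA']
            exact Or.inr ⟨m - 1, f, hf, rfl⟩
          have hcast : ((m - 1 : ℕ) : ℝ) + f = e - 1 := by
            have h1 : ((m - 1 : ℕ) : ℝ) = (m : ℝ) - 1 := by
              push_cast [Nat.cast_sub hm]; ring
            rw [h1, hmf]; ring
          rwa [hcast] at hmemA
end

section
/- Let A ⊆ ℝ be nonempty with 1 + A ⊆ A. Then the following are equivalent: (a) there exists δ ∈ ℝ such that for every a ∈ A, a − ⌊a − δ⌋ ∈ A (A is concenterable); (b) St(A) := A \ (1 + A) is bounded above. -/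
private lemma add_nat17 (A : Set ℝ) (h : ∀ a ∈ A, a + 1 ∈ A) :
    ∀ (n : ℕ), ∀ a ∈ A, a + n ∈ A := by
  intro n
  induction n with
  | zero => simpa
  | succ k ih =>
      intro a ha
      have := h _ (ih a ha)
      push_cast
      convert this using 1
      ring

private lemma sub_nat17 (A : Set ℝ) (M : ℝ) (hM : M ∈ upperBounds {a ∈ A | a - 1 ∉ A}) :
    ∀ (n : ℕ), ∀ a ∈ A, (∀ j : ℕ, j < n → M < a - j) → a - n ∈ A := by
  intro n
  induction n with
  | zero => simpa
  | succ k ih =>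
      intro a ha hj
      have hk : a - k ∈ A := ih a ha (fun j hjk => hj j (by omega))
      have hgt : M < a - k := hj k (by omega)
      have : (a - k) - 1 ∈ A := by
        by_contra hc
        have := hM ⟨hk, hc⟩
        linarith
      convert this using 1
      push_cast
      ring

/-- For nonempty `A ⊆ ℝ` with `1 + A ⊆ A`: `A` is concenterable (there is `δ`
with `a - ⌊a - δ⌋ ∈ A` for all `a ∈ A`) iff `St(A) = A \ (1 + A)` is bounded
above. -/
theorem stmt17 (A : Set ℝ) (hne : A.Nonempty) (h : ∀ a ∈ A, a + 1 ∈ A) :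
    (∃ δ : ℝ, ∀ a ∈ A, a - ⌊a - δ⌋ ∈ A) ↔ BddAbove {a ∈ A | a - 1 ∉ A} := by
  constructor
  · rintro ⟨δ, hδ⟩
    refine ⟨δ + 1, ?_⟩
    rintro a ⟨ha, ha1⟩
    by_contra hgt
    push_neg at hgt
    set n : ℤ := ⌊a - δ⌋ with hn
    have hn1 : 1 ≤ n := by
      have : (1 : ℝ) ≤ a - δ := by linarith
      exact_mod_cast Int.le_floor.mpr (by exact_mod_cast this)
    have hb : a - n ∈ A := hδ a ha
    have := add_nat17 A h (n - 1).toNat _ hb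
    apply ha1
    have hcast : (((n - 1).toNat : ℤ) : ℝ) = (n : ℝ) - 1 := by
      rw [Int.toNat_of_nonneg (by omega)]; push_cast; ring
    have : a - n + ((n - 1).toNat : ℝ) ∈ A := by exact_mod_cast this
    rw [show a - (n:ℝ) + ((n - 1).toNat : ℝ) = a - 1 by
      push_cast at hcast ⊢; linarith] at this
    exact this
  · rintro ⟨M, hM⟩
    refine ⟨M, fun a ha => ?_⟩
    set n : ℤ := ⌊a - M⌋ with hn
    rcases le_or_gt n 0 with hle | hpos
    · have := add_nat17 A h (-n).toNat a ha
      have hcast : ((-n).toNat : ℝ) = -(n : ℝ) := by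
        exact_mod_cast congrArg (Int.cast : ℤ → ℝ) (Int.toNat_of_nonneg (by omega))
      rw [hcast] at this
      rwa [sub_eq_add_neg]
    · have hfl : (n : ℝ) ≤ a - M := Int.floor_le _
      have := sub_nat17 A M hM n.toNat a ha ?_
      · have hcast : ((n.toNat : ℕ) : ℝ) = (n : ℝ) := by
          exact_mod_cast congrArg (Int.cast : ℤ → ℝ) (Int.toNat_of_nonneg (by omega))
        rwa [hcast] at this
      · intro j hj
        have : (j : ℝ) ≤ (n : ℝ) - 1 := by
          have : (j : ℤ) ≤ n - 1 := by omega
          exact_mod_cast this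
        linarith
end

section
/- Let H ⊆ ℝ be an additive subsemigroup with 1 + H ⊆ H and ∅ ≠ Pk(H) ≠ H, where Pk(H) = {x : x + ℤ ⊆ H}. Then Pk(H) consists entirely of irrational numbers, and Pk(H) is an ideal of H: H + Pk(H) ⊆ Pk(H). -/
/-- Let `H ⊆ ℝ` be an additive subsemigroup with `1 + H ⊆ H` and
`∅ ≠ Pk(H) ≠ H`, where `Pk(H) = {x : x + ℤ ⊆ H}`. Then every element of
`Pk(H)` is irrational, and `Pk(H)` is an ideal of `H`. -/
theorem stmt18 (H : Set ℝ)
    (hadd : ∀ a ∈ H, ∀ b ∈ H, a + b ∈ H)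
    (hup : ∀ a ∈ H, a + 1 ∈ H)
    (hne : {x : ℝ | ∀ k : ℤ, x + k ∈ H}.Nonempty)
    (hneq : {x : ℝ | ∀ k : ℤ, x + k ∈ H} ≠ H) :
    (∀ x ∈ {x : ℝ | ∀ k : ℤ, x + k ∈ H}, Irrational x) ∧
    (∀ a ∈ H, ∀ x ∈ {x : ℝ | ∀ k : ℤ, x + k ∈ H},
      a + x ∈ {x : ℝ | ∀ k : ℤ, x + k ∈ H}) := by
  refine ⟨?_, ?_⟩
  · rintro x hx ⟨r, hr⟩
    -- key: adding (n+1) integer-shifted copies of x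
    have key : ∀ n : ℕ, ∀ a ∈ H, ∀ k : ℤ, a + (n + 1 : ℕ) * x + k ∈ H := by
      intro n
      induction n with
      | zero =>
        intro a ha k
        have := hadd a ha _ (hx k)
        simpa [add_assoc] using this
      | succ m ih =>
        intro a ha k
        have h1 : a + (m + 1 : ℕ) * x + (0 : ℤ) ∈ H := ih a ha 0
        have h2 := hadd _ h1 _ (hx k)
        have heq : (a + (m + 1 : ℕ) * x + ((0:ℤ):ℝ)) + (x + k) = a + (m + 1 + 1 : ℕ) * x + k := by
          push_cast; ring
        rwa [heq] at h2
    have hdx : (r.den : ℝ) * x = (r.num : ℝ) := by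
      have hq : (r.den : ℚ) * r = r.num := by
        have hd : (r.den : ℚ) ≠ 0 := by exact_mod_cast r.den_nz
        rw [mul_comm, eq_comm, ← div_eq_iff hd]
        exact Rat.num_div_den r
      rw [← hr]
      exact_mod_cast congrArg (Rat.cast : ℚ → ℝ) hq
    apply hneq
    apply Set.Subset.antisymm
    · intro y hy
      simpa using hy 0
    · intro a ha j
      have hkey := key (r.den - 1) a ha (j - r.num)
      rw [Nat.sub_add_cancel r.pos, hdx] at hkey
      convert hkey using 1
      push_cast; ring
  · intro a ha x hx k
    have := hadd a ha _ (hx k)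
    simpa [add_assoc] using this
end

section
/- The additive group ℚ contains no 'mixed' subsemigroup: if H ⊆ ℚ is a subsemigroup with 1 + H ⊆ H, and Pk(H) = {x ∈ ℚ : x + ℤ ⊆ H}, then Pk(H) = ∅ or Pk(H) = H. -/
/-- The additive group `ℚ` contains no mixed subsemigroup: if `H ⊆ ℚ` is closed
under addition with `1 + H ⊆ H`, and `Pk(H) = {x : x + ℤ ⊆ H}`, then
`Pk(H) = ∅` or `Pk(H) = H`. -/
theorem stmt19 (H : Set ℚ)
    (hadd : ∀ a ∈ H, ∀ b ∈ H, a + b ∈ H)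
    (hup : ∀ a ∈ H, a + 1 ∈ H) :
    {x : ℚ | ∀ k : ℤ, x + k ∈ H} = ∅ ∨ {x : ℚ | ∀ k : ℤ, x + k ∈ H} = H := by
  rcases Set.eq_empty_or_nonempty {x : ℚ | ∀ k : ℤ, x + k ∈ H} with he | ⟨x, hx⟩
  · exact Or.inl he
  right
  simp only [Set.mem_setOf_eq] at hx
  have hmul : ∀ n : ℕ, ∀ k : ℤ, ((n : ℚ) + 1) * x + k ∈ H := by
    intro n
    induction n with
    | zero => intro k; simpa using hx k
    | succ n ih =>
      intro k
      have h := hadd _ (ih 0) _ (hx k)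
      have : ((↑(n + 1) : ℚ) + 1) * x + k = ((n : ℚ) + 1) * x + (0 : ℤ) + (x + k) := by
        push_cast; ring
      rw [this]; exact h
  have hint : ∀ j : ℤ, (j : ℚ) ∈ H := by
    intro j
    have hd : ((x.den : ℚ)) * x = x.num := by
      rw [mul_comm, Rat.mul_den_eq_num]
    obtain ⟨m, hm⟩ : ∃ m : ℕ, x.den = m + 1 := ⟨x.den - 1, by have := x.pos; omega⟩
    have h := hmul m (j - x.num)
    rw [hm] at hd
    push_cast at hd
    rw [hd] at h
    have : (j : ℚ) = (x.num : ℚ) + ((j - x.num : ℤ) : ℚ) := by push_cast; ring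
    rw [this]; exact h
  ext a
  simp only [Set.mem_setOf_eq]
  constructor
  · intro h; simpa using h 0
  · intro ha k
    exact hadd a ha _ (hint k)
end
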